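/- arXiv:2407.06408 — 2 statements merged into one kernel-verified Lean document; each statement's English description precedes it below -/
import Mathlib

section
/- (Zero duality gap.) Let W ∈ Sⁿ and let F = {X ⪰ 0 : A(X) = b} be nonempty. Then the optimal value p* = min{½‖X − W‖² : X ∈ F} of the best approximation problem equals the optimal value d* of its Lagrangian dual: p* = d* = sup{ φ(y,Z) : y ∈ ℝᵐ, Z ∈ Sⁿ₊ }, where φ(y,Z) = −½‖Z + A*(y)‖² + ⟨y, b − A(W)⟩ − ⟨Z, W⟩. -/
open Matrix Set

noncomputable section

/-- Squared Frobenius norm via the trace inner product. -/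
def frobSq {k : ℕ} (M : Matrix (Fin k) (Fin k) ℝ) : ℝ := (Mᵀ * M).trace

/-- The linear map `A X = (⟨Aᵢ, X⟩)ᵢ` (trace inner product). -/
def calA {n m : ℕ} (A : Fin m → Matrix (Fin n) (Fin n) ℝ)
    (X : Matrix (Fin n) (Fin n) ℝ) : Fin m → ℝ := fun i => (A i * X).trace

/-- The adjoint map `A* λ = ∑ᵢ λᵢ Aᵢ`. -/
def adjA {n m : ℕ} (A : Fin m → Matrix (Fin n) (Fin n) ℝ) (lam : Fin m → ℝ) :
    Matrix (Fin n) (Fin n) ℝ := ∑ i, lam i • A i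

/-- The spectrahedron `F = {X ⪰ 0 : A X = b}`. -/
def spectra {n m : ℕ} (A : Fin m → Matrix (Fin n) (Fin n) ℝ) (b : Fin m → ℝ) :
    Set (Matrix (Fin n) (Fin n) ℝ) := {X | X.PosSemidef ∧ calA A X = b}

/-- The dual functional `φ(y,Z) = −½‖Z + A*y‖² + ⟨y, b − A(W)⟩ − ⟨Z, W⟩`. -/
def dualPhi {n m : ℕ} (A : Fin m → Matrix (Fin n) (Fin n) ℝ) (b : Fin m → ℝ)
    (W : Matrix (Fin n) (Fin n) ℝ) (y : Fin m → ℝ) (Z : Matrix (Fin n) (Fin n) ℝ) : ℝ :=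
  -(1 / 2) * frobSq (Z + adjA A y) + (∑ i, y i * (b i - calA A W i)) - (Z * W).trace

/-
Weak duality is the identity, valid for every feasible `X`,
  `φ(y, Z) = ½‖X − W‖² − ½‖Z + A*y − (X − W)‖² − ⟨Z, X⟩`,
together with `⟨Z, X⟩ ≥ 0` for `Z, X ⪰ 0`.

For the reverse inequality let `X̄` be the minimiser and `Λ = X̄ − W`. No constraint qualification
is assumed, so the dual optimum need not be attained; instead `(Λ, ⟨Λ, X̄⟩)` lies in the closure
of the cone `C = {(Z + A*y, ⟨y, b⟩ − t) : Z ⪰ 0, t ≥ 0}`. Indeed, a functional `(G, s)` separating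
it from `C` has `s ≤ 0`, `G ⪰ 0` and `A(G) = −s b`, so `(X̄ + G) / (1 − s)` is feasible, and the
optimality condition `⟨Λ, X − X̄⟩ ≥ 0` at this point contradicts the separation. The continuous
function `(S, r) ↦ r − ½‖S‖² − ⟨S, W⟩` is bounded by `d*` on `C`, hence at `(Λ, ⟨Λ, X̄⟩)`, where it
equals `½‖Λ‖² = p*`.

The argument works in any real Hilbert space, for the dual variable `Z` ranging over a convex cone
`D` and the primal variable over its dual cone; `Sⁿ₊` is self-dual in `Sⁿ`.
-/

open scoped RealInnerProductSpace

section ConicBestApproximation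

variable {E ι : Type*} [NormedAddCommGroup E] [InnerProductSpace ℝ E]

def conicFeasibleSet (D : PointedCone ℝ E) (a : ι → E) (b : ι → ℝ) : Set E :=
  {x | x ∈ PointedCone.dual (innerₗ E) (D : Set E) ∧ ∀ i, ⟪a i, x⟫ = b i}

variable {D : PointedCone ℝ E} {a : ι → E} {b : ι → ℝ} {w : E}

lemma convex_conicFeasibleSet : Convex ℝ (conicFeasibleSet D a b) := by
  rintro x ⟨hxD, hxa⟩ x' ⟨hx'D, hx'a⟩ s t hs ht hst
  refine ⟨PointedCone.convex _ hxD hx'D hs ht hst, fun i => ?_⟩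
  rw [inner_add_right, real_inner_smul_right, real_inner_smul_right, hxa, hx'a, ← add_mul, hst,
    one_mul]

lemma inner_nonneg_of_isMinOn_norm_sub {K : Set E} (hK : Convex ℝ K) {x₀ : E} (hx₀ : x₀ ∈ K)
    (hmin : IsMinOn (fun x => ‖x - w‖) K x₀) {x : E} (hx : x ∈ K) : 0 ≤ ⟪x₀ - w, x - x₀⟫ := by
  have hinf : ‖w - x₀‖ = ⨅ x : K, ‖w - x‖ := by
    have : Nonempty K := ⟨⟨x₀, hx₀⟩⟩
    refine le_antisymm (le_ciInf fun x => ?_)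
      (ciInf_le (f := fun x : K => ‖w - x‖) ⟨0, ?_⟩ ⟨x₀, hx₀⟩)
    · simpa only [norm_sub_rev w] using isMinOn_iff.1 hmin x x.2
    · rintro _ ⟨x, rfl⟩
      exact norm_nonneg _
  have := (norm_eq_iInf_iff_real_inner_le_zero hK hx₀).1 hinf x hx
  rw [← neg_sub, inner_neg_left] at this
  linarith

lemma exists_inner_add_mul_eq [CompleteSpace E] (f : StrongDual ℝ (E × ℝ)) :
    ∃ (g : E) (s : ℝ), ∀ q : E × ℝ, f q = ⟪g, q.1⟫ + q.2 * s := by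
  refine ⟨(InnerProductSpace.toDual ℝ E).symm (f.comp (ContinuousLinearMap.inl ℝ E ℝ)), f (0, 1),
    fun q => ?_⟩
  have hq : q = (q.1, 0) + q.2 • (0, 1) := by simp
  rw [hq, map_add, map_smul, InnerProductSpace.toDual_symm_apply]
  simp

variable [Fintype ι]

def conicDualObjective (a : ι → E) (b : ι → ℝ) (w : E) (y : ι → ℝ) (z : E) : ℝ :=
  -(1 / 2) * ‖z + ∑ i, y i • a i‖ ^ 2 + ∑ i, y i * (b i - ⟪a i, w⟫) - ⟪z, w⟫

lemma conicDualObjective_eq {x : E} (hx : ∀ i, ⟪a i, x⟫ = b i) (y : ι → ℝ) (z : E) :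
    conicDualObjective a b w y z =
      ‖x - w‖ ^ 2 / 2 - ‖z + ∑ i, y i • a i - (x - w)‖ ^ 2 / 2 - ⟪z, x⟫ := by
  have hb : ∑ i, y i * (b i - ⟪a i, w⟫) = ⟪∑ i, y i • a i, x - w⟫ := by
    simp only [sum_inner, real_inner_smul_left, inner_sub_right, hx, mul_sub,
      Finset.sum_sub_distrib]
  rw [conicDualObjective, hb, norm_sub_sq_real (z + _), inner_add_left, inner_sub_right,
    inner_sub_right]
  ring

theorem conicDualObjective_le {x : E} (hx : x ∈ conicFeasibleSet D a b) (y : ι → ℝ) {z : E}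
    (hz : z ∈ D) : conicDualObjective a b w y z ≤ ‖x - w‖ ^ 2 / 2 := by
  have hzx : 0 ≤ ⟪z, x⟫ := hx.1 hz
  rw [conicDualObjective_eq hx.2]
  nlinarith [sq_nonneg ‖z + ∑ i, y i • a i - (x - w)‖]

def conicDualCone (D : PointedCone ℝ E) (a : ι → E) (b : ι → ℝ) : PointedCone ℝ (E × ℝ) where
  carrier := {q | ∃ z ∈ D, ∃ (y : ι → ℝ) (t : ℝ), 0 ≤ t ∧
    q = (z + ∑ i, y i • a i, ∑ i, y i * b i - t)}
  add_mem' := by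
    rintro _ _ ⟨z, hz, y, t, ht, rfl⟩ ⟨z', hz', y', t', ht', rfl⟩
    refine ⟨z + z', D.add_mem hz hz', y + y', t + t', add_nonneg ht ht', ?_⟩
    simp only [Prod.mk_add_mk, Pi.add_apply, add_smul, add_mul, Finset.sum_add_distrib]
    congr 1 <;> abel
  zero_mem' := ⟨0, D.zero_mem, 0, 0, le_rfl, by simp [Prod.zero_eq_mk]⟩
  smul_mem' := by
    rintro ⟨c, hc⟩ _ ⟨z, hz, y, t, ht, rfl⟩
    refine ⟨c • z, D.smul_mem hc hz, c • y, c * t, mul_nonneg hc ht, ?_⟩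
    simp only [Nonneg.mk_smul, Prod.smul_mk, smul_add, Finset.smul_sum, Pi.smul_apply, smul_eq_mul,
      mul_smul, mul_sub, Finset.mul_sum, mul_assoc]

lemma le_of_mem_closure_conicDualCone {u : ℝ}
    (hu : ∀ (y : ι → ℝ), ∀ z ∈ D, conicDualObjective a b w y z ≤ u) {q : E × ℝ}
    (hq : q ∈ closure (conicDualCone D a b : Set (E × ℝ))) :
    q.2 - ‖q.1‖ ^ 2 / 2 - ⟪q.1, w⟫ ≤ u := by
  have hcont : Continuous fun q : E × ℝ => q.2 - ‖q.1‖ ^ 2 / 2 - ⟪q.1, w⟫ := by fun_prop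
  refine closure_minimal (fun q hq => ?_) (isClosed_le hcont continuous_const) hq
  obtain ⟨z, hz, y, t, ht, rfl⟩ := hq
  have := hu y z hz
  simp only [Set.mem_ofPred_eq, conicDualObjective, mul_sub, Finset.sum_sub_distrib,
    inner_add_left, sum_inner, real_inner_smul_left] at this ⊢
  linarith

lemma dual_conditions_of_nonneg_on_conicDualCone {g : E} {s : ℝ}
    (h : ∀ q ∈ conicDualCone D a b, 0 ≤ ⟪g, q.1⟫ + q.2 * s) :
    s ≤ 0 ∧ g ∈ PointedCone.dual (innerₗ E) (D : Set E) ∧ ∀ i, ⟪a i, g⟫ = -s * b i := by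
  classical
  refine ⟨?_, fun z hz => ?_, fun i => ?_⟩
  · simpa using h (0, -1) ⟨0, D.zero_mem, 0, 1, zero_le_one, by simp⟩
  · simpa [real_inner_comm] using h (z, 0) ⟨z, hz, 0, 0, le_rfl, by simp⟩
  · have hc : ∀ c : ℝ, 0 ≤ c * (⟪a i, g⟫ + s * b i) := fun c => by
      have := h (c • a i, c * b i)
        ⟨0, D.zero_mem, Pi.single i c, 0, le_rfl, by simp [Pi.single_apply]⟩
      rw [real_inner_smul_right, real_inner_comm] at this
      linarith
    linarith [hc 1, hc (-1)]

variable [CompleteSpace E]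

theorem mem_closure_conicDualCone {x₀ : E} (hx₀ : x₀ ∈ conicFeasibleSet D a b)
    (hvi : ∀ x ∈ conicFeasibleSet D a b, 0 ≤ ⟪x₀ - w, x - x₀⟫) :
    (x₀ - w, ⟪x₀ - w, x₀⟫) ∈ closure (conicDualCone D a b : Set (E × ℝ)) := by
  by_contra hnot
  obtain ⟨f, hf, hfx₀⟩ :=
    ProperCone.hyperplane_separation_point (Submodule.closure (conicDualCone D a b)) hnot
  obtain ⟨g, s, hfg⟩ := exists_inner_add_mul_eq f
  obtain ⟨hs, hgD, hga⟩ := dual_conditions_of_nonneg_on_conicDualCone fun q hq =>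
    hfg q ▸ hf q (subset_closure hq)
  have hs1 : 0 < 1 - s := by linarith
  have hx : (1 - s)⁻¹ • (x₀ + g) ∈ conicFeasibleSet D a b := by
    refine ⟨PointedCone.smul_mem _ (inv_pos.2 hs1).le ((PointedCone.dual _ _).add_mem hx₀.1 hgD),
      fun i => ?_⟩
    rw [real_inner_smul_right, inner_add_right, hx₀.2, hga]
    field_simp [hs1.ne']
    ring
  have hvi_x := hvi _ hx
  rw [inner_sub_right, real_inner_smul_right, inner_add_right] at hvi_x
  rw [hfg, real_inner_comm] at hfx₀
  have := mul_nonneg hs1.le hvi_x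
  field_simp [hs1.ne'] at this
  linarith

theorem isLUB_conicDualObjective {p : ℝ}
    (hp : IsLeast ((fun x => ‖x - w‖ ^ 2 / 2) '' conicFeasibleSet D a b) p) :
    IsLUB {v | ∃ (y : ι → ℝ) (z : E), z ∈ D ∧ v = conicDualObjective a b w y z} p := by
  obtain ⟨⟨x₀, hx₀, rfl⟩, hmin⟩ := hp
  refine ⟨?_, fun u hu => ?_⟩
  · rintro _ ⟨y, z, hz, rfl⟩
    exact conicDualObjective_le hx₀ y hz
  have hmin' : IsMinOn (fun x => ‖x - w‖) (conicFeasibleSet D a b) x₀ := fun x hx => by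
    have : ‖x₀ - w‖ ^ 2 / 2 ≤ ‖x - w‖ ^ 2 / 2 := hmin ⟨x, hx, rfl⟩
    exact (pow_le_pow_iff_left₀ (norm_nonneg _) (norm_nonneg _) two_ne_zero).1 (by linarith)
  have hbound := le_of_mem_closure_conicDualCone (fun y z hz => hu ⟨y, z, hz, rfl⟩)
    (mem_closure_conicDualCone hx₀ fun x hx =>
      inner_nonneg_of_isMinOn_norm_sub convex_conicFeasibleSet hx₀ hmin' hx)
  have hnorm : ⟪x₀ - w, x₀⟫ - ⟪x₀ - w, w⟫ = ‖x₀ - w‖ ^ 2 := by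
    rw [← inner_sub_right, real_inner_self_eq_norm_sq]
  dsimp only at hbound ⊢
  linarith

end ConicBestApproximation

namespace Matrix

attribute [local instance] frobeniusNormedAddCommGroup frobeniusNormedSpace

abbrev frobeniusInnerProductSpace {m n : Type*} [Fintype m] [Fintype n] :
    InnerProductSpace ℝ (Matrix m n ℝ) where
  inner X Y := trace (Xᵀ * Y)
  norm_sq_eq_re_inner X := by
    rw [frobenius_norm_def, ← Real.rpow_natCast, ← Real.rpow_mul (by positivity)]
    norm_num [trace, mul_apply, ← sq, Finset.sum_comm (γ := m)]
  conj_inner_symm X Y := by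
    rw [conj_trivial, ← trace_transpose, transpose_mul, transpose_transpose]
  add_left X Y Z := by simp [Matrix.add_mul, trace_add]
  smul_left X Y r := by simp [trace_smul]

lemma PosSemidef.trace_mul_nonneg {ι : Type*} [Fintype ι] {X Y : Matrix ι ι ℝ}
    (hX : X.PosSemidef) (hY : Y.PosSemidef) : 0 ≤ trace (X * Y) := by
  have hYs : Y.IsSymm := isHermitian_iff_isSymm.1 hY.1
  have hXY : trace (X * Y) = star 1 ⬝ᵥ (X ⊙ Y *ᵥ 1) := by
    simp [trace, mul_apply, dotProduct, mulVec, hYs.apply]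
  exact hXY ▸ (hX.hadamard hY).dotProduct_mulVec_nonneg 1

end Matrix

section SymmetricMatrices

attribute [local instance] Matrix.frobeniusNormedAddCommGroup Matrix.frobeniusInnerProductSpace

variable {n : ℕ}

/-- `Sⁿ`, with the inner product inherited from the Frobenius inner product `⟪X, Y⟫ = tr (Xᵀ Y)`
on all matrices. -/
def symmetricMatrices (n : ℕ) : Submodule ℝ (Matrix (Fin n) (Fin n) ℝ) where
  carrier := {X | X.IsSymm}
  add_mem' := IsSymm.add
  zero_mem' := isSymm_zero
  smul_mem' c _ hX := hX.smul c

instance : NormedAddCommGroup (symmetricMatrices n) := Submodule.normedAddCommGroup _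

instance : InnerProductSpace ℝ (symmetricMatrices n) := Submodule.innerProductSpace _

instance : CompleteSpace (symmetricMatrices n) :=
  (symmetricMatrices n).complete_of_finiteDimensional.completeSpace_coe

lemma symmetricMatrices.inner_eq_trace (X Y : symmetricMatrices n) :
    ⟪X, Y⟫ = trace (X.1 * Y.1) := by
  change trace (X.1ᵀ * Y.1) = _
  rw [X.2.eq]

lemma symmetricMatrices.norm_sq_eq_frobSq (X : symmetricMatrices n) : ‖X‖ ^ 2 = frobSq X.1 := by
  rw [← real_inner_self_eq_norm_sq]
  rfl

end SymmetricMatrices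

def psdCone (n : ℕ) : PointedCone ℝ (symmetricMatrices n) where
  carrier := {X | X.1.PosSemidef}
  add_mem' hX hY := hX.add hY
  zero_mem' := PosSemidef.zero
  smul_mem' c _ hX := hX.smul c.2

lemma dual_psdCone (n : ℕ) :
    PointedCone.dual (innerₗ _) (psdCone n : Set (symmetricMatrices n)) = psdCone n := by
  ext X
  rw [PointedCone.mem_dual]
  simp only [SetLike.mem_coe, innerₗ_apply_apply, symmetricMatrices.inner_eq_trace]
  refine ⟨fun h => .of_dotProduct_mulVec_nonneg (isHermitian_iff_isSymm.2 X.2) fun v => ?_,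
    fun hX Z hZ => PosSemidef.trace_mul_nonneg hZ hX⟩
  have hv := posSemidef_vecMulVec_self_star v
  have := h (x := ⟨_, isHermitian_iff_isSymm.1 hv.1⟩) hv
  rwa [vecMulVec_mul, trace_vecMulVec, dotProduct_comm, ← dotProduct_mulVec] at this

variable {n m : ℕ} {A : Fin m → Matrix (Fin n) (Fin n) ℝ} {b : Fin m → ℝ}
  {W : Matrix (Fin n) (Fin n) ℝ}

lemma mem_conicFeasibleSet_psdCone (hA : ∀ i, A i ∈ symmetricMatrices n)
    {X : symmetricMatrices n} :
    X ∈ conicFeasibleSet (psdCone n) (fun i => ⟨A i, hA i⟩) b ↔ X.1 ∈ spectra A b := by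
  simp only [conicFeasibleSet, Set.mem_ofPred_eq, dual_psdCone, spectra, funext_iff,
    symmetricMatrices.inner_eq_trace, calA]
  rfl

lemma half_norm_sub_sq_eq_frobSq (hW : W ∈ symmetricMatrices n) (X : symmetricMatrices n) :
    ‖X - ⟨W, hW⟩‖ ^ 2 / 2 = 1 / 2 * frobSq (X.1 - W) := by
  rw [symmetricMatrices.norm_sq_eq_frobSq, Submodule.coe_sub]
  ring

lemma primal_values_eq_image (hA : ∀ i, A i ∈ symmetricMatrices n)
    (hW : W ∈ symmetricMatrices n) :
    {v | ∃ X ∈ spectra A b, v = 1 / 2 * frobSq (X - W)} =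
      (fun x => ‖x - ⟨W, hW⟩‖ ^ 2 / 2) ''
        conicFeasibleSet (psdCone n) (fun i => ⟨A i, hA i⟩) b := by
  ext v
  constructor
  · rintro ⟨X, hX, rfl⟩
    have hXS : X ∈ symmetricMatrices n := isHermitian_iff_isSymm.1 hX.1.1
    exact ⟨⟨X, hXS⟩, (mem_conicFeasibleSet_psdCone hA).2 hX, half_norm_sub_sq_eq_frobSq hW ⟨X, hXS⟩⟩
  · rintro ⟨X, hX, rfl⟩
    exact ⟨X.1, (mem_conicFeasibleSet_psdCone hA).1 hX, half_norm_sub_sq_eq_frobSq hW X⟩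

lemma dualPhi_eq_conicDualObjective (hA : ∀ i, A i ∈ symmetricMatrices n)
    (hW : W ∈ symmetricMatrices n) (y : Fin m → ℝ) (Z : symmetricMatrices n) :
    dualPhi A b W y Z.1 = conicDualObjective (fun i => ⟨A i, hA i⟩) b ⟨W, hW⟩ y Z := by
  have hS : (Z + ∑ i, y i • (⟨A i, hA i⟩ : symmetricMatrices n)).1 = Z.1 + adjA A y := by
    simp [adjA]
  rw [dualPhi, conicDualObjective, symmetricMatrices.norm_sq_eq_frobSq, hS]
  simp only [symmetricMatrices.inner_eq_trace, calA]

lemma dual_values_eq (hA : ∀ i, A i ∈ symmetricMatrices n) (hW : W ∈ symmetricMatrices n) :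
    {v | ∃ (y : Fin m → ℝ) (Z : Matrix (Fin n) (Fin n) ℝ), Z.PosSemidef ∧ v = dualPhi A b W y Z} =
      {v | ∃ (y : Fin m → ℝ) (z : symmetricMatrices n), z ∈ psdCone n ∧
        v = conicDualObjective (fun i => ⟨A i, hA i⟩) b ⟨W, hW⟩ y z} := by
  ext v
  constructor
  · rintro ⟨y, Z, hZ, rfl⟩
    have hZS : Z ∈ symmetricMatrices n := isHermitian_iff_isSymm.1 hZ.1
    exact ⟨y, ⟨Z, hZS⟩, hZ, dualPhi_eq_conicDualObjective hA hW y ⟨Z, hZS⟩⟩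
  · rintro ⟨y, z, hz, rfl⟩
    exact ⟨y, z.1, hz, (dualPhi_eq_conicDualObjective hA hW y z).symm⟩

theorem stmt7_general {n m : ℕ} (A : Fin m → Matrix (Fin n) (Fin n) ℝ)
    (hA : ∀ i, (A i).IsSymm) (b : Fin m → ℝ)
    (W : Matrix (Fin n) (Fin n) ℝ) (hW : W.IsSymm)
    (pstar : ℝ)
    (hp : IsLeast {v : ℝ | ∃ X ∈ spectra A b, v = (1 / 2) * frobSq (X - W)} pstar) :
    IsLUB {v : ℝ | ∃ (y : Fin m → ℝ) (Z : Matrix (Fin n) (Fin n) ℝ),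
        Z.PosSemidef ∧ v = dualPhi A b W y Z} pstar := by
  rw [primal_values_eq_image hA hW] at hp
  rw [dual_values_eq hA hW]
  exact isLUB_conicDualObjective hp

/-- zero duality gap: the optimal value `p*` of the best approximation
problem equals `d* = sup{φ(y,Z) : y ∈ ℝᵐ, Z ⪰ 0}`. -/
theorem stmt7 {n m : ℕ} (A : Fin m → Matrix (Fin n) (Fin n) ℝ)
    (hA : ∀ i, (A i).IsSymm) (hLI : LinearIndependent ℝ A) (b : Fin m → ℝ)
    (hFne : (spectra A b).Nonempty)
    (W : Matrix (Fin n) (Fin n) ℝ) (hW : W.IsSymm)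
    (pstar : ℝ)
    (hp : IsLeast {v : ℝ | ∃ X ∈ spectra A b, v = (1 / 2) * frobSq (X - W)} pstar) :
    IsLUB {v : ℝ | ∃ (y : Fin m → ℝ) (Z : Matrix (Fin n) (Fin n) ℝ),
        Z.PosSemidef ∧ v = dualPhi A b W y Z} pstar :=
  stmt7_general A hA b W hW pstar hp
end
end

section
/- Let f = {V R Vᵀ : R ∈ S^r₊} be the minimal face of Sⁿ₊ containing the nonempty spectrahedron F = {X ⪰ 0 : A(X) = b} (V with orthonormal columns and range(V) = range(X̂) for some X̂ in the relative interior of F), let W ∈ Sⁿ, and define F_f(y) = A(P_f(W + A*(y))) − b. Suppose ȳ ∈ ℝᵐ satisfies F_f(ȳ) = 0 and let λ¹, …, λᵏ ∈ ℝᵐ be linearly independent solutions of the auxiliary system (0 ≠ A*(λⁱ) ⪰ 0, ⟨b, λⁱ⟩ = 0). Then F_f(ȳ + v) = 0 for all v in the span of {λ¹, …, λᵏ}; in particular the solution set {y : F_f(y) = 0} contains at least k linearly independent points. -/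
open Matrix Set

noncomputable section

/-- `P` is a nearest point to `X` in `C` (Frobenius norm). -/
def IsProjOn {k : ℕ} (C : Set (Matrix (Fin k) (Fin k) ℝ))
    (X P : Matrix (Fin k) (Fin k) ℝ) : Prop :=
  P ∈ C ∧ ∀ Y ∈ C, frobSq (X - P) ≤ frobSq (X - Y)

/-- `f` is a face of the convex cone `K`. -/
def IsFaceOfCone {k : ℕ} (f K : Set (Matrix (Fin k) (Fin k) ℝ)) : Prop :=
  f ⊆ K ∧ Convex ℝ f ∧ (∀ c : ℝ, 0 ≤ c → ∀ x ∈ f, c • x ∈ f) ∧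
    ∀ x ∈ K, ∀ y ∈ K, x + y ∈ f → x ∈ f ∧ y ∈ f

/-- `f` is the minimal face of the cone `K` containing the set `C`. -/
def IsMinFace {k : ℕ} (f K C : Set (Matrix (Fin k) (Fin k) ℝ)) : Prop :=
  IsFaceOfCone f K ∧ C ⊆ f ∧ ∀ g, IsFaceOfCone g K → C ⊆ g → f ⊆ g

/-!
A solution `λ` of the auxiliary system gives a PSD matrix `A* λ` with `⟨A* λ, X⟩ = ⟨λ, b⟩ = 0`
on the spectrahedron, so it exposes a face `{Y ⪰ 0 : ⟨A* λ, Y⟩ = 0}` of the PSD cone containing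
it, hence containing its minimal face `f`. Thus `A* v ⟂ f` for every `v` in the span of the
`λⁱ`, and translating a point orthogonally to the convex set `f` does not move its projection:
`P_f (W + A* (ȳ + v)) = P_f (W + A* ȳ)`.
-/

section Frobenius

variable {k : ℕ}

lemma frobSq_add (X Y : Matrix (Fin k) (Fin k) ℝ) :
    frobSq (X + Y) = frobSq X + 2 * (Xᵀ * Y).trace + frobSq Y := by
  have hYX : (Yᵀ * X).trace = (Xᵀ * Y).trace := by
    rw [← trace_transpose, transpose_mul, transpose_transpose]
  simp only [frobSq, transpose_add, add_mul, mul_add, trace_add, hYX]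
  ring

lemma frobSq_smul (c : ℝ) (X : Matrix (Fin k) (Fin k) ℝ) :
    frobSq (c • X) = c ^ 2 * frobSq X := by
  simp only [frobSq, transpose_smul, smul_mul, Matrix.mul_smul, trace_smul, smul_eq_mul]
  ring

lemma frobSq_add_add_frobSq_sub (X Y : Matrix (Fin k) (Fin k) ℝ) :
    frobSq (X + Y) + frobSq (X - Y) = 2 * frobSq X + 2 * frobSq Y := by
  have hneg : frobSq (-Y) = frobSq Y := by simp [frobSq]
  rw [sub_eq_add_neg, frobSq_add, frobSq_add, hneg, mul_neg, trace_neg]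
  ring

lemma frobSq_nonneg (X : Matrix (Fin k) (Fin k) ℝ) : 0 ≤ frobSq X := by
  simpa [frobSq] using (posSemidef_conjTranspose_mul_self X).trace_nonneg

lemma frobSq_eq_zero_iff {X : Matrix (Fin k) (Fin k) ℝ} : frobSq X = 0 ↔ X = 0 := by
  simpa [frobSq] using
    (posSemidef_conjTranspose_mul_self X).trace_eq_zero_iff.trans conjTranspose_mul_self_eq_zero

end Frobenius

section Projection

variable {k : ℕ} {C : Set (Matrix (Fin k) (Fin k) ℝ)} {M P Q D : Matrix (Fin k) (Fin k) ℝ}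

/-- By the parallelogram law, the midpoint of two nearest points would be strictly nearer
unless they coincide. -/
lemma IsProjOn.unique (hC : Convex ℝ C) (hP : IsProjOn C M P) (hQ : IsProjOn C M Q) :
    P = Q := by
  have hPQ : frobSq (M - P) = frobSq (M - Q) := le_antisymm (hP.2 Q hQ.1) (hQ.2 P hP.1)
  have hmid := hP.2 _ (hC hP.1 hQ.1 (a := 1 / 2) (b := 1 / 2) (by norm_num) (by norm_num)
    (by norm_num))
  have hmid_eq : M - ((1 / 2 : ℝ) • P + (1 / 2 : ℝ) • Q) = (1 / 2 : ℝ) • ((M - P) + (M - Q)) := by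
    module
  have hpar := frobSq_add_add_frobSq_sub (M - P) (M - Q)
  rw [hmid_eq, frobSq_smul] at hmid
  rw [show M - P - (M - Q) = Q - P by abel] at hpar
  have hle : frobSq (Q - P) ≤ 0 := by nlinarith
  exact (sub_eq_zero.mp (frobSq_eq_zero_iff.mp (hle.antisymm (frobSq_nonneg _)))).symm

/-- Moving the point by a direction orthogonal to `C` shifts all squared distances to `C` by
the same amount. -/
lemma IsProjOn.add_of_orthogonal (hP : IsProjOn C M P) (hD : ∀ Y ∈ C, (Yᵀ * D).trace = 0) :
    IsProjOn C (M + D) P := by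
  have hdist : ∀ Y ∈ C,
      frobSq (M + D - Y) = frobSq (M - Y) + 2 * (Mᵀ * D).trace + frobSq D := by
    intro Y hY
    rw [show M + D - Y = (M - Y) + D by abel, frobSq_add, transpose_sub, sub_mul, trace_sub,
      hD Y hY, sub_zero]
  refine ⟨hP.1, fun Y hY => ?_⟩
  rw [hdist P hP.1, hdist Y hY]
  linarith [hP.2 Y hY]

end Projection

section Face

variable {k : ℕ}

lemma trace_mul_nonneg_of_posSemidef {Z X : Matrix (Fin k) (Fin k) ℝ} (hZ : Z.PosSemidef)
    (hX : X.PosSemidef) : 0 ≤ (Z * X).trace := by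
  obtain ⟨B, rfl⟩ : ∃ B : Matrix (Fin k) (Fin k) ℝ, X = star B * B := by
    open scoped MatrixOrder in exact CStarAlgebra.nonneg_iff_eq_star_mul_self.mp hX.nonneg
  rw [← Matrix.mul_assoc, trace_mul_comm, ← Matrix.mul_assoc]
  exact (hZ.mul_mul_conjTranspose_same B).trace_nonneg

lemma isFaceOfCone_posSemidef_trace_mul_eq_zero {Z : Matrix (Fin k) (Fin k) ℝ}
    (hZ : Z.PosSemidef) :
    IsFaceOfCone {Y | Y.PosSemidef ∧ (Z * Y).trace = 0} {Y | Y.PosSemidef} := by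
  refine ⟨fun Y hY => hY.1, ?_, fun c hc Y hY => ⟨hY.1.smul hc, ?_⟩, fun X hX Y hY hXY => ?_⟩
  · intro X hX Y hY a c ha hc _
    refine ⟨(hX.1.smul ha).add (hY.1.smul hc), ?_⟩
    simp [mul_add, hX.2, hY.2]
  · simp [hY.2]
  · have hsum : (Z * X).trace + (Z * Y).trace = 0 := by rw [← trace_add, ← mul_add]; exact hXY.2
    have hX0 := trace_mul_nonneg_of_posSemidef hZ hX
    have hY0 := trace_mul_nonneg_of_posSemidef hZ hY
    exact ⟨⟨hX, by linarith⟩, ⟨hY, by linarith⟩⟩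

end Face

section Spectrahedron

variable {n m : ℕ} (A : Fin m → Matrix (Fin n) (Fin n) ℝ)

lemma adjA_add (u v : Fin m → ℝ) : adjA A (u + v) = adjA A u + adjA A v := by
  simp [adjA, add_smul, Finset.sum_add_distrib]

lemma trace_adjA_mul (v : Fin m → ℝ) (X : Matrix (Fin n) (Fin n) ℝ) :
    (adjA A v * X).trace = v ⬝ᵥ calA A X := by
  simp [adjA, calA, dotProduct, Finset.sum_mul, trace_sum]

variable {A} {b : Fin m → ℝ} {f : Set (Matrix (Fin n) (Fin n) ℝ)}

lemma dotProduct_calA_eq_zero_of_isMinFace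
    (hmin : IsMinFace f {Y | Y.PosSemidef} (spectra A b)) {lam : Fin m → ℝ}
    (hpsd : (adjA A lam).PosSemidef) (hb : b ⬝ᵥ lam = 0) {Y : Matrix (Fin n) (Fin n) ℝ}
    (hY : Y ∈ f) : lam ⬝ᵥ calA A Y = 0 := by
  have hF : spectra A b ⊆ {Y | Y.PosSemidef ∧ (adjA A lam * Y).trace = 0} :=
    fun X hX => ⟨hX.1, by rw [trace_adjA_mul, hX.2, dotProduct_comm, hb]⟩
  rw [← trace_adjA_mul]
  exact (hmin.2.2 _ (isFaceOfCone_posSemidef_trace_mul_eq_zero hpsd) hF hY).2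

lemma dotProduct_calA_eq_zero_of_mem_span
    (hmin : IsMinFace f {Y | Y.PosSemidef} (spectra A b)) {k : ℕ} {lam : Fin k → Fin m → ℝ}
    (haux : ∀ i, (adjA A (lam i)).PosSemidef ∧ b ⬝ᵥ lam i = 0) {v : Fin m → ℝ}
    (hv : v ∈ Submodule.span ℝ (range lam)) {Y : Matrix (Fin n) (Fin n) ℝ} (hY : Y ∈ f) :
    v ⬝ᵥ calA A Y = 0 := by
  have hle : Submodule.span ℝ (range lam) ≤
      LinearMap.ker ((dotProductBilin ℝ ℝ).flip (calA A Y)) :=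
    Submodule.span_le.mpr <| range_subset_iff.mpr fun i =>
      dotProduct_calA_eq_zero_of_isMinFace hmin (haux i).1 (haux i).2 hY
  simpa using hle hv

end Spectrahedron

section LinearIndependent

variable {K V ι : Type*} [Field K] [AddCommGroup V] [Module K V] [Fintype ι]

lemma linearIndependent_const_add {v : ι → V} (hv : LinearIndependent K v) {x : V}
    (hx : x ∉ Submodule.span K (range v)) : LinearIndependent K fun i => x + v i := by
  rw [Fintype.linearIndependent_iff] at hv ⊢
  intro a ha
  have hsum : (∑ i, a i) • x + ∑ i, a i • v i = 0 := by
    simpa [smul_add, Finset.sum_add_distrib, Finset.sum_smul] using ha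
  have hcoef : ∑ i, a i = 0 := by
    by_contra hne
    refine hx ?_
    rw [← inv_smul_smul₀ hne x, eq_neg_of_add_eq_zero_left hsum]
    exact Submodule.smul_mem _ _ <| Submodule.neg_mem _ <| Submodule.sum_mem _
      fun i _ => Submodule.smul_mem _ _ (Submodule.subset_span ⟨i, rfl⟩)
  rw [hcoef, zero_smul, zero_add] at hsum
  exact hv a hsum

lemma exists_linearIndependent_sub_mem_span {v : ι → V} (hv : LinearIndependent K v) (x : V) :
    ∃ g : ι → V, LinearIndependent K g ∧ ∀ i, g i - x ∈ Submodule.span K (range v) := by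
  have hvi (i : ι) : v i ∈ Submodule.span K (range v) := Submodule.subset_span ⟨i, rfl⟩
  by_cases hx : x ∈ Submodule.span K (range v)
  · exact ⟨v, hv, fun i => Submodule.sub_mem _ (hvi i) hx⟩
  · exact ⟨fun i => x + v i, linearIndependent_const_add hv hx, fun i => by simpa using hvi i⟩

end LinearIndependent

theorem stmt9_general {n m k : ℕ} (A : Fin m → Matrix (Fin n) (Fin n) ℝ)
    (b : Fin m → ℝ)
    (f : Set (Matrix (Fin n) (Fin n) ℝ))
    (hmin : IsMinFace f {Y : Matrix (Fin n) (Fin n) ℝ | Y.PosSemidef} (spectra A b))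
    (W : Matrix (Fin n) (Fin n) ℝ)
    -- the nearest-point projection onto the face `f`:
    (Pf : Matrix (Fin n) (Fin n) ℝ → Matrix (Fin n) (Fin n) ℝ)
    (hPf : ∀ M, IsProjOn f M (Pf M))
    (ybar : Fin m → ℝ) (hroot : calA A (Pf (W + adjA A ybar)) = b)
    (lam : Fin k → (Fin m → ℝ)) (hlamLI : LinearIndependent ℝ lam)
    (haux : ∀ i, adjA A (lam i) ≠ 0 ∧ (adjA A (lam i)).PosSemidef ∧
      ∑ j, b j * lam i j = 0) :
    (∀ v ∈ Submodule.span ℝ (Set.range lam),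
        calA A (Pf (W + adjA A (ybar + v))) = b) ∧
    ∃ g : Fin k → (Fin m → ℝ), LinearIndependent ℝ g ∧
      ∀ i, calA A (Pf (W + adjA A (g i))) = b := by
  have hshift : ∀ v ∈ Submodule.span ℝ (Set.range lam),
      calA A (Pf (W + adjA A (ybar + v))) = b := by
    intro v hv
    have horth : ∀ Y ∈ f, (Yᵀ * adjA A v).trace = 0 := fun Y hY => by
      have hsymm : Yᵀ = Y := by simpa using (hmin.1.1 hY).isHermitian.eq
      rw [hsymm, trace_mul_comm, trace_adjA_mul]
      exact dotProduct_calA_eq_zero_of_mem_span hmin (fun i => (haux i).2) hv hY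
    have hproj : IsProjOn f (W + adjA A (ybar + v)) (Pf (W + adjA A ybar)) := by
      rw [adjA_add, ← add_assoc]
      exact IsProjOn.add_of_orthogonal (hPf _) horth
    rw [IsProjOn.unique hmin.1.2.1 (hPf _) hproj, hroot]
  obtain ⟨g, hgLI, hg⟩ := exists_linearIndependent_sub_mem_span hlamLI ybar
  exact ⟨hshift, g, hgLI, fun i => by simpa using hshift _ (hg i)⟩

/-- if `ȳ` is a root of `F_f(y) = A(P_f(W + A*y)) − b` and `λ¹, …, λᵏ` are
linearly independent solutions of the auxiliary system, then `F_f(ȳ + v) = 0` for every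
`v` in their span; in particular `{y : F_f(y) = 0}` contains at least `k` linearly
independent points. -/
theorem stmt9 {n m r k : ℕ} (A : Fin m → Matrix (Fin n) (Fin n) ℝ)
    (hA : ∀ i, (A i).IsSymm) (hLI : LinearIndependent ℝ A) (b : Fin m → ℝ)
    (hFne : (spectra A b).Nonempty)
    (V : Matrix (Fin n) (Fin r) ℝ) (hV : Vᵀ * V = 1)
    (f : Set (Matrix (Fin n) (Fin n) ℝ))
    (hf : f = {Y : Matrix (Fin n) (Fin n) ℝ |
        ∃ R : Matrix (Fin r) (Fin r) ℝ, R.PosSemidef ∧ Y = V * R * Vᵀ})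
    (hmin : IsMinFace f {Y : Matrix (Fin n) (Fin n) ℝ | Y.PosSemidef} (spectra A b))
    (W : Matrix (Fin n) (Fin n) ℝ) (hW : W.IsSymm)
    -- the nearest-point projection onto the face `f`:
    (Pf : Matrix (Fin n) (Fin n) ℝ → Matrix (Fin n) (Fin n) ℝ)
    (hPf : ∀ M, IsProjOn f M (Pf M))
    (ybar : Fin m → ℝ) (hroot : calA A (Pf (W + adjA A ybar)) = b)
    (lam : Fin k → (Fin m → ℝ)) (hlamLI : LinearIndependent ℝ lam)
    (haux : ∀ i, adjA A (lam i) ≠ 0 ∧ (adjA A (lam i)).PosSemidef ∧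
      ∑ j, b j * lam i j = 0) :
    (∀ v ∈ Submodule.span ℝ (Set.range lam),
        calA A (Pf (W + adjA A (ybar + v))) = b) ∧
    ∃ g : Fin k → (Fin m → ℝ), LinearIndependent ℝ g ∧
      ∀ i, calA A (Pf (W + adjA A (g i))) = b :=
  stmt9_general A b f hmin W Pf hPf ybar hroot lam hlamLI haux
end
end
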